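/- There is a constant k_0 ∈ ℕ such that for every k ≥ k_0 and every d with 2k·ln k − ln k − 4 ≤ d ≤ 2k·ln k, the following holds w.h.p. for the random multigraph G'(n,⌈dn/2⌉): every nonempty set Y ⊆ V with |Y| ≤ ⌈2n·ln ln k/(k·ln k)⌉ satisfies e(Y) < (ℓ/2)·|Y|, where ℓ = e^{−7}·ln k. -/

import Mathlib

open Filter

/-- Uniform counting probability on a finite sample space `Ω`. -/
noncomputable def prob {Ω : Type*} (p : Ω → Prop) : ℝ :=
  (Nat.card {x : Ω // p x} : ℝ) / (Nat.card Ω : ℝ)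

/-- The sample space of the random multigraph `G'(n,m)`. -/
abbrev MultiSpace (n m : ℕ) := Fin m → Fin n × Fin n

/-- `e(Y)`: the number of edges (with multiplicity) with both endpoints in `Y`. -/
noncomputable def eIn {n m : ℕ} (e : MultiSpace n m) (Y : Finset (Fin n)) : ℕ :=
  Nat.card {t : Fin m // (e t).1 ∈ Y ∧ (e t).2 ∈ Y}

/-!
First moment method. Let `ℓ = ⌊e⁻⁷ ln k / 2⌋`. If some `Y` with `|Y| = y` spans at least `ℓ y`
edges, then some `ℓ y` of the `m` edges all land in `Y × Y`, so a union bound gives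
`P ≤ ∑_y C(n,y) C(m,ℓy) (y/n)^(2ℓy)`. With `C(N,j) ≤ (eN/j)^j`, `e m ≤ a ℓ n` and `y ≤ c n`
the `y`-th term is at most `(D y/n)^y` with `D = e a^ℓ c^(ℓ-2)`, and the sum is `O(D/n)` as soon as
`D c ≤ 1/4`. For `a ℓ = 2e k ln k`, `c = 3 ln ln k / (k ln k)` we get `a c = O(ln ln k / ln k)`, and
`(a c)^ℓ ≤ k⁻⁴` because `ℓ ≍ ln k`; this is what makes `D c ≤ 1/4` for large `k`.
-/

open Finset

lemma prob_nonneg {Ω : Type*} (p : Ω → Prop) : 0 ≤ prob p := by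
  unfold prob; positivity

section Prob

variable {Ω : Type*} [Fintype Ω]

lemma prob_eq_card_filter (p : Ω → Prop) [DecidablePred p] :
    prob p = (univ.filter p).card / Fintype.card Ω := by
  rw [prob, Nat.card_eq_fintype_card, Nat.card_eq_fintype_card, Fintype.card_subtype]

lemma prob_mono {p q : Ω → Prop} (h : ∀ x, p x → q x) : prob p ≤ prob q := by
  classical
  simp only [prob_eq_card_filter]
  gcongr
  exact h _

lemma prob_not [Nonempty Ω] (p : Ω → Prop) : prob (fun x => ¬ p x) = 1 - prob p := by
  classical
  simp only [prob_eq_card_filter]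
  rw [eq_sub_iff_add_eq, ← add_div, div_eq_one_iff_eq (by positivity), add_comm]
  exact_mod_cast (card_filter_add_card_filter_not (s := univ) p).trans card_univ

lemma prob_exists_le_sum {ι : Type*} (s : Finset ι) (p : ι → Ω → Prop) :
    prob (fun x => ∃ i ∈ s, p i x) ≤ ∑ i ∈ s, prob (p i) := by
  classical
  simp only [prob_eq_card_filter, ← sum_div]
  gcongr
  calc ((univ.filter fun x => ∃ i ∈ s, p i x).card : ℝ)
      = (s.biUnion fun i => univ.filter (p i)).card := by
        congr; ext; simp
    _ ≤ ∑ i ∈ s, ((univ.filter (p i)).card : ℝ) := by exact_mod_cast card_biUnion_le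

end Prob

lemma prob_forall_mem {ι β : Type*} [Fintype ι] [Fintype β] [Nonempty β]
    (T : Finset ι) (S : Finset β) :
    prob (fun e : ι → β => ∀ i ∈ T, e i ∈ S) = ((S.card : ℝ) / Fintype.card β) ^ T.card := by
  classical
  have hpi : univ.filter (fun e : ι → β => ∀ i ∈ T, e i ∈ S) =
      Fintype.piFinset fun i => if i ∈ T then S else univ := by
    ext e
    simp only [mem_filter, mem_univ, true_and, Fintype.mem_piFinset]
    exact ⟨fun h i => by split_ifs with hi <;> simp [h i, hi],
      fun h i hi => by simpa [hi] using h i⟩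
  have hcard : (Fintype.piFinset fun i => if i ∈ T then S else univ).card =
      S.card ^ T.card * Fintype.card β ^ (Fintype.card ι - T.card) := by
    simp only [Fintype.card_piFinset, apply_ite Finset.card, card_univ, prod_ite, prod_const,
      filter_mem_eq_inter, univ_inter, ← card_compl, compl_eq_univ_sdiff, filter_not]
  have hβ : (0 : ℝ) < Fintype.card β := by exact_mod_cast Fintype.card_pos
  rw [prob_eq_card_filter, hpi, hcard, Fintype.card_fun,
    ← pow_sub_mul_pow _ (card_le_univ T)]
  push_cast
  rw [div_pow]
  field_simp

lemma eIn_eq_card_filter {n m : ℕ} (e : MultiSpace n m) (Y : Finset (Fin n)) :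
    eIn e Y = (univ.filter fun i => e i ∈ Y ×ˢ Y).card := by
  rw [eIn, Nat.card_eq_fintype_card, Fintype.card_subtype]
  simp only [mem_product]

lemma prob_le_eIn_le {n m : ℕ} (hn : 0 < n) (Y : Finset (Fin n)) (t : ℕ) :
    prob (fun e : MultiSpace n m => t ≤ eIn e Y) ≤ m.choose t * (((Y.card : ℝ) / n) ^ 2) ^ t := by
  have : Nonempty (Fin n × Fin n) := ⟨(⟨0, hn⟩, ⟨0, hn⟩)⟩
  have hsub : ∀ e : MultiSpace n m, t ≤ eIn e Y →
      ∃ T ∈ powersetCard t univ, ∀ i ∈ T, e i ∈ Y ×ˢ Y := by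
    intro e he
    rw [eIn_eq_card_filter] at he
    obtain ⟨T, hT, hTcard⟩ := exists_subset_card_eq he
    exact ⟨T, mem_powersetCard_univ.2 hTcard, fun i hi => (mem_filter.1 (hT hi)).2⟩
  calc prob (fun e : MultiSpace n m => t ≤ eIn e Y)
      ≤ ∑ T ∈ powersetCard t univ, prob (fun e : MultiSpace n m => ∀ i ∈ T, e i ∈ Y ×ˢ Y) :=
        (prob_mono hsub).trans (prob_exists_le_sum _ _)
    _ = ∑ T ∈ powersetCard t (univ : Finset (Fin m)), (((Y.card : ℝ) / n) ^ 2) ^ t := by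
        refine sum_congr rfl fun T hT => ?_
        rw [prob_forall_mem, mem_powersetCard_univ.1 hT, card_product, Fintype.card_prod,
          Fintype.card_fin]
        push_cast
        ring
    _ = m.choose t * (((Y.card : ℝ) / n) ^ 2) ^ t := by
        rw [sum_const, card_powersetCard, card_univ, Fintype.card_fin, nsmul_eq_mul]

lemma prob_exists_card_le_eIn_le {n m Y₀ : ℕ} (hn : 0 < n) (t : ℕ → ℕ) :
    prob (fun e : MultiSpace n m =>
        ∃ Y : Finset (Fin n), Y.Nonempty ∧ Y.card ≤ Y₀ ∧ t Y.card ≤ eIn e Y) ≤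
      ∑ y ∈ Icc 1 Y₀, n.choose y * (m.choose (t y) * (((y : ℝ) / n) ^ 2) ^ t y) := by
  have hsub : ∀ e : MultiSpace n m,
      (∃ Y : Finset (Fin n), Y.Nonempty ∧ Y.card ≤ Y₀ ∧ t Y.card ≤ eIn e Y) →
        ∃ y ∈ Icc 1 Y₀, ∃ Y ∈ powersetCard y univ, t y ≤ eIn e Y := by
    rintro e ⟨Y, hY, hYcard, hYe⟩
    exact ⟨Y.card, mem_Icc.2 ⟨hY.card_pos, hYcard⟩, Y, mem_powersetCard_univ.2 rfl, hYe⟩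
  calc _ ≤ ∑ y ∈ Icc 1 Y₀, prob (fun e : MultiSpace n m =>
          ∃ Y ∈ powersetCard y univ, t y ≤ eIn e Y) :=
        (prob_mono hsub).trans (prob_exists_le_sum _ _)
    _ ≤ ∑ y ∈ Icc 1 Y₀, ∑ Y ∈ powersetCard y (univ : Finset (Fin n)),
          prob (fun e : MultiSpace n m => t y ≤ eIn e Y) :=
        sum_le_sum fun y _ => prob_exists_le_sum _ _
    _ ≤ ∑ y ∈ Icc 1 Y₀, ∑ _Y ∈ powersetCard y (univ : Finset (Fin n)),
          (m.choose (t y) * (((y : ℝ) / n) ^ 2) ^ t y) := by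
        gcongr with y _ Y hY
        simpa only [mem_powersetCard_univ.1 hY] using prob_le_eIn_le hn Y (t y)
    _ = _ := by simp only [sum_const, card_powersetCard, card_univ, Fintype.card_fin, nsmul_eq_mul]

lemma choose_le_exp_one_mul_div_pow (n k : ℕ) :
    (n.choose k : ℝ) ≤ (Real.exp 1 * n / k) ^ k := by
  rcases k.eq_zero_or_pos with rfl | hk
  · simp
  have hfac : (0 : ℝ) < k.factorial := by exact_mod_cast k.factorial_pos
  have hkk : (k : ℝ) ^ k ≤ Real.exp 1 ^ k * k.factorial := by
    rw [Real.exp_one_pow, ← div_le_iff₀ hfac]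
    exact Real.pow_div_factorial_le_exp _ k.cast_nonneg k
  calc (n.choose k : ℝ) ≤ (n : ℝ) ^ k / k.factorial := Nat.choose_le_pow_div k n
    _ ≤ (Real.exp 1 * n / k) ^ k := by
        rw [div_le_iff₀ hfac, div_pow, mul_pow, div_mul_eq_mul_div,
          le_div_iff₀ (by positivity)]
        calc (n : ℝ) ^ k * k ^ k ≤ n ^ k * (Real.exp 1 ^ k * k.factorial) := by gcongr
          _ = _ := by ring

lemma choose_mul_choose_mul_pow_le {n m y ℓ : ℕ} {a c : ℝ} (hn : 0 < n) (hy : 0 < y)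
    (hℓ : 2 ≤ ℓ) (ha : 0 ≤ a) (hm : Real.exp 1 * m ≤ a * ℓ * n) (hyc : (y : ℝ) ≤ c * n) :
    n.choose y * (m.choose (ℓ * y) * (((y : ℝ) / n) ^ 2) ^ (ℓ * y)) ≤
      (Real.exp 1 * a ^ ℓ * c ^ (ℓ - 2) / n * y) ^ y := by
  obtain ⟨j, rfl⟩ : ∃ j, ℓ = j + 2 := ⟨ℓ - 2, by omega⟩
  have hnR : (0 : ℝ) < n := by exact_mod_cast hn
  set u : ℝ := y / n with hu
  have hu0 : 0 < u := by positivity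
  have huc : u ≤ c := by rwa [hu, div_le_iff₀ hnR]
  have hchoose_n : (n.choose y : ℝ) ≤ (Real.exp 1 / u) ^ y := by
    rw [hu, div_div_eq_mul_div]
    exact choose_le_exp_one_mul_div_pow n y
  have hchoose_m : (m.choose ((j + 2) * y) : ℝ) * (u ^ 2) ^ ((j + 2) * y) ≤
      (a * u) ^ ((j + 2) * y) := by
    calc (m.choose ((j + 2) * y) : ℝ) * (u ^ 2) ^ ((j + 2) * y)
        ≤ (Real.exp 1 * m / ((j + 2) * y : ℕ)) ^ ((j + 2) * y) * (u ^ 2) ^ ((j + 2) * y) := by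
          gcongr; exact choose_le_exp_one_mul_div_pow _ _
      _ = (Real.exp 1 * m / ((j + 2) * n) * u) ^ ((j + 2) * y) := by
          rw [← mul_pow, hu]; push_cast; field_simp
      _ ≤ (a * u) ^ ((j + 2) * y) := by
          gcongr
          rw [div_le_iff₀ (by positivity)]
          push_cast at hm
          linarith
  calc (n.choose y : ℝ) * (m.choose ((j + 2) * y) * (u ^ 2) ^ ((j + 2) * y))
      ≤ (Real.exp 1 / u) ^ y * (a * u) ^ ((j + 2) * y) := by gcongr
    _ = (Real.exp 1 * a ^ (j + 2) * u ^ j * u) ^ y := by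
        rw [pow_mul, ← mul_pow]
        congr 1
        field_simp
        ring
    _ ≤ (Real.exp 1 * a ^ (j + 2) * c ^ (j + 2 - 2) / n * y) ^ y := by
        rw [Nat.add_sub_cancel, div_mul_eq_mul_div, mul_div_assoc, ← hu]
        gcongr

lemma sum_Icc_mul_pow_self_le {b : ℝ} {Y₀ : ℕ} (hb : 0 ≤ b) (hbY₀ : b * Y₀ ≤ 1 / 4) :
    ∑ y ∈ Icc 1 Y₀, (b * y) ^ y ≤ 4 * b := by
  rw [← Ico_add_one_right_eq_Icc, sum_Ico_eq_sum_range, Nat.add_sub_cancel]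
  have hterm : ∀ j ∈ range Y₀, (b * ↑(1 + j)) ^ (1 + j) ≤ 2 * b * (1 / 2) ^ j := by
    intro j hj
    have hj1 : b * (j + 1) ≤ 1 / 4 :=
      le_trans (by gcongr; exact_mod_cast mem_range.1 hj) hbY₀
    have htwo : ((j + 1 : ℕ) : ℝ) ≤ 2 ^ (j + 1) := by exact_mod_cast (j + 1).lt_two_pow_self.le
    rw [add_comm 1 j, pow_succ]
    push_cast at htwo ⊢
    calc (b * (j + 1)) ^ j * (b * (j + 1)) ≤ (1 / 4) ^ j * (b * 2 ^ (j + 1)) := by gcongr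
      _ = 2 * b * (1 / 4 * 2) ^ j := by rw [mul_pow, pow_succ]; ring
      _ = 2 * b * (1 / 2) ^ j := by norm_num
  calc _ ≤ ∑ j ∈ range Y₀, 2 * b * (1 / 2 : ℝ) ^ j := sum_le_sum hterm
    _ ≤ 2 * b * 2 := by rw [← mul_sum]; gcongr; exact sum_geometric_two_le Y₀
    _ = 4 * b := by ring

lemma prob_exists_mul_card_le_eIn_le {n m Y₀ ℓ : ℕ} {a c : ℝ} (hn : 0 < n) (hℓ : 2 ≤ ℓ)
    (ha : 0 ≤ a) (hc : 0 ≤ c) (hm : Real.exp 1 * m ≤ a * ℓ * n) (hY₀ : (Y₀ : ℝ) ≤ c * n)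
    (hac : Real.exp 1 * a ^ ℓ * c ^ (ℓ - 1) ≤ 1 / 4) :
    prob (fun e : MultiSpace n m =>
        ∃ Y : Finset (Fin n), Y.Nonempty ∧ Y.card ≤ Y₀ ∧ ℓ * Y.card ≤ eIn e Y) ≤
      4 * (Real.exp 1 * a ^ ℓ * c ^ (ℓ - 2) / n) := by
  set D := Real.exp 1 * a ^ ℓ * c ^ (ℓ - 2)
  have hnR : (0 : ℝ) < n := by exact_mod_cast hn
  have hDY₀ : D / n * Y₀ ≤ 1 / 4 := by
    calc D / n * Y₀ ≤ D / n * (c * n) := by gcongr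
      _ = Real.exp 1 * a ^ ℓ * c ^ (ℓ - 1) := by
          rw [show ℓ - 1 = ℓ - 2 + 1 by omega, pow_succ]; field_simp; simp only [D]; ring
      _ ≤ 1 / 4 := hac
  calc _ ≤ ∑ y ∈ Icc 1 Y₀, n.choose y * (m.choose (ℓ * y) * (((y : ℝ) / n) ^ 2) ^ (ℓ * y)) :=
        prob_exists_card_le_eIn_le hn (ℓ * ·)
    _ ≤ ∑ y ∈ Icc 1 Y₀, (D / n * y) ^ y := by
        refine sum_le_sum fun y hy => ?_
        have hy := mem_Icc.1 hy
        refine choose_mul_choose_mul_pow_le hn hy.1 hℓ ha hm (le_trans ?_ hY₀)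
        exact_mod_cast hy.2
    _ ≤ 4 * (D / n) := sum_Icc_mul_pow_self_le (by positivity) hDY₀

lemma tendsto_prob_forall_eIn_lt {m Y₀ : ℕ → ℕ} {ℓ : ℕ} {L a c : ℝ} (hℓ : 2 ≤ ℓ)
    (hℓL : ℓ ≤ L) (ha : 0 ≤ a) (hc : 0 ≤ c)
    (hm : ∀ᶠ n in atTop, Real.exp 1 * m n ≤ a * ℓ * n)
    (hY₀ : ∀ᶠ n in atTop, (Y₀ n : ℝ) ≤ c * n)
    (hac : Real.exp 1 * a ^ ℓ * c ^ (ℓ - 1) ≤ 1 / 4) :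
    Tendsto (fun n => prob (fun e : MultiSpace n (m n) =>
        ∀ Y : Finset (Fin n), Y.Nonempty → Y.card ≤ Y₀ n → (eIn e Y : ℝ) < L * Y.card))
      atTop (nhds 1) := by
  set bad := fun n => prob (fun e : MultiSpace n (m n) =>
    ¬ ∀ Y : Finset (Fin n), Y.Nonempty → Y.card ≤ Y₀ n → (eIn e Y : ℝ) < L * Y.card)
  have hbad : Tendsto bad atTop (nhds 0) := by
    have hlim : Tendsto (fun n : ℕ => 4 * (Real.exp 1 * a ^ ℓ * c ^ (ℓ - 2) / n)) atTop
        (nhds 0) := by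
      simpa using (tendsto_const_div_atTop_nhds_zero_nat
        (Real.exp 1 * a ^ ℓ * c ^ (ℓ - 2))).const_mul (4 : ℝ)
    refine squeeze_zero' (Eventually.of_forall fun n => prob_nonneg _) ?_ hlim
    filter_upwards [hm, hY₀, eventually_gt_atTop 0] with n hmn hY₀n hn
    refine le_trans (prob_mono fun e he => ?_)
      (prob_exists_mul_card_le_eIn_le hn hℓ ha hc hmn hY₀n hac)
    push Not at he
    obtain ⟨Y, hY, hYcard, hYe⟩ := he
    refine ⟨Y, hY, hYcard, ?_⟩
    exact_mod_cast (mul_le_mul_of_nonneg_right hℓL (Nat.cast_nonneg _)).trans hYe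
  have hgood := (tendsto_const_nhds (x := (1 : ℝ))).sub hbad
  rw [sub_zero] at hgood
  refine hgood.congr' ?_
  filter_upwards [eventually_gt_atTop 0] with n hn
  have : Nonempty (MultiSpace n (m n)) := ⟨fun _ => (⟨0, hn⟩, ⟨0, hn⟩)⟩
  simp only [bad, prob_not, sub_sub_cancel]

lemma eventually_log_conditions : ∀ᶠ k : ℕ in atTop,
    4 ≤ k ∧ 4 * Real.exp 7 ≤ Real.log k ∧ 1 ≤ Real.log (Real.log k) ∧
      24 * Real.exp 8 * (Real.log (Real.log k) / Real.log k) ≤ Real.exp (-(16 * Real.exp 7)) := by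
  have hlog : Tendsto (fun k : ℕ => Real.log k) atTop atTop :=
    Real.tendsto_log_atTop.comp tendsto_natCast_atTop_atTop
  have hlog_div : Tendsto (fun x => Real.log x / x) atTop (nhds 0) := by
    simpa using Real.tendsto_pow_log_div_mul_add_atTop 1 0 1 one_ne_zero
  have hw : Tendsto (fun k : ℕ => 24 * Real.exp 8 * (Real.log (Real.log k) / Real.log k))
      atTop (nhds 0) := by
    simpa using (hlog_div.comp hlog).const_mul (24 * Real.exp 8)
  filter_upwards [eventually_ge_atTop 4, hlog.eventually_ge_atTop (4 * Real.exp 7),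
    (Real.tendsto_log_atTop.comp hlog).eventually_ge_atTop 1,
    (tendsto_order.1 hw).2 _ (Real.exp_pos _)] with k h1 h2 h3 h4
  exact ⟨h1, h2, h3, h4.le⟩

lemma half_le_natFloor {x : ℝ} (hx : 2 ≤ x) : x / 2 ≤ ⌊x⌋₊ := by
  linarith [Nat.lt_floor_add_one x]

lemma two_le_exp_neg_seven_mul_div_two {x : ℝ} (hx : 4 * Real.exp 7 ≤ x) :
    2 ≤ Real.exp (-7) * x / 2 := by
  have := Real.exp_pos (-7)
  calc (2 : ℝ) = Real.exp (-7) * (4 * Real.exp 7) / 2 := by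
        rw [mul_left_comm, ← Real.exp_add]; norm_num
    _ ≤ Real.exp (-7) * x / 2 := by gcongr

lemma le_mul_natFloor_of_le {x : ℝ} (hx : 4 * Real.exp 7 ≤ x) :
    x ≤ 4 * Real.exp 7 * ⌊Real.exp (-7) * x / 2⌋₊ := by
  have h := half_le_natFloor (two_le_exp_neg_seven_mul_div_two hx)
  have h7 : Real.exp 7 * Real.exp (-7) = 1 := by rw [← Real.exp_add]; norm_num
  nlinarith [Real.exp_pos 7]

lemma eventually_exp_one_mul_ceil_le {d b : ℝ} (hb : 1 ≤ b) (hd : d ≤ 2 * b) :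
    ∀ᶠ n : ℕ in atTop, Real.exp 1 * ⌈d * n / 2⌉₊ ≤ 2 * Real.exp 1 * b * n := by
  filter_upwards [eventually_ge_atTop 1] with n hn
  have hnR : (1 : ℝ) ≤ n := by exact_mod_cast hn
  have hceil : (⌈d * n / 2⌉₊ : ℝ) ≤ b * n + 1 :=
    calc (⌈d * n / 2⌉₊ : ℝ) ≤ ⌈b * n⌉₊ := by
          gcongr; linarith [mul_le_mul_of_nonneg_right hd (by positivity : (0 : ℝ) ≤ n)]
      _ ≤ b * n + 1 := (Nat.ceil_lt_add_one (by positivity)).le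
  have hbn : 1 ≤ b * n := by nlinarith
  nlinarith [Real.exp_pos 1]

lemma eventually_ceil_two_mul_le {y z : ℝ} (hy : 0 < y) (hz : 0 < z) :
    ∀ᶠ n : ℕ in atTop, (⌈2 * n * y / z⌉₊ : ℝ) ≤ 3 * y / z * n := by
  filter_upwards [tendsto_natCast_atTop_atTop.eventually_ge_atTop (z / y)] with n hn
  have h1 : 1 ≤ n * y / z := by
    rw [le_div_iff₀ hz, one_mul]; rwa [div_le_iff₀ hy] at hn
  calc (⌈2 * n * y / z⌉₊ : ℝ) ≤ 2 * n * y / z + 1 := (Nat.ceil_lt_add_one (by positivity)).le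
    _ ≤ 3 * y / z * n := by linarith [show 2 * n * y / z + n * y / z = 3 * y / z * n by ring]

lemma exp_one_mul_pow_mul_pow_le {k ℓ : ℕ} {a c : ℝ} (hk : 4 ≤ k) (ha : 0 ≤ a)
    (hc : 1 / (k : ℝ) ^ 2 ≤ c) (hℓ : Real.log k ≤ 4 * Real.exp 7 * ℓ) (hℓ1 : 1 ≤ ℓ)
    (hac : a * c ≤ Real.exp (-(16 * Real.exp 7))) :
    Real.exp 1 * a ^ ℓ * c ^ (ℓ - 1) ≤ 1 / 4 := by
  have hkR : (4 : ℝ) ≤ k := by exact_mod_cast hk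
  have hc0 : 0 < c := lt_of_lt_of_le (by positivity) hc
  have hpow : (a * c) ^ ℓ ≤ 1 / (k : ℝ) ^ 4 :=
    calc (a * c) ^ ℓ ≤ Real.exp (-(16 * Real.exp 7)) ^ ℓ := by gcongr
      _ = Real.exp (-(16 * Real.exp 7 * ℓ)) := by rw [← Real.exp_nat_mul]; ring_nf
      _ ≤ Real.exp (-(4 * Real.log k)) := Real.exp_le_exp.2 (by linarith)
      _ = 1 / (k : ℝ) ^ 4 := by
          rw [Real.exp_neg, show 4 * Real.log k = Real.log ((k : ℝ) ^ 4) by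
            rw [Real.log_pow]; norm_num, Real.exp_log (by positivity), one_div]
  obtain ⟨j, rfl⟩ : ∃ j, ℓ = j + 1 := ⟨ℓ - 1, by omega⟩
  have hsplit :
      Real.exp 1 * a ^ (j + 1) * c ^ (j + 1 - 1) = Real.exp 1 * (a * c) ^ (j + 1) / c := by
    rw [Nat.add_sub_cancel, mul_pow, pow_succ c]; field_simp
  rw [hsplit, div_le_iff₀ hc0]
  calc Real.exp 1 * (a * c) ^ (j + 1) ≤ 3 * (1 / (k : ℝ) ^ 4) := by
        gcongr; linarith [Real.exp_one_lt_d9]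
    _ ≤ 1 / 4 * (1 / (k : ℝ) ^ 2) := by
        field_simp; nlinarith
    _ ≤ 1 / 4 * c := by gcongr

lemma exp_one_mul_pow_mul_pow_le_of_log {k ℓ : ℕ} (hk : 4 ≤ k) (hllk : 1 ≤ Real.log (Real.log k))
    (hw : 24 * Real.exp 8 * (Real.log (Real.log k) / Real.log k) ≤ Real.exp (-(16 * Real.exp 7)))
    (hℓ : Real.log k ≤ 4 * Real.exp 7 * ℓ) (hℓ1 : 1 ≤ ℓ) :
    Real.exp 1 * (2 * Real.exp 1 * (k * Real.log k) / ℓ) ^ ℓ *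
      (3 * Real.log (Real.log k) / (k * Real.log k)) ^ (ℓ - 1) ≤ 1 / 4 := by
  have hkR : (4 : ℝ) ≤ k := by exact_mod_cast hk
  have hlk : 0 < Real.log k := Real.log_pos (by linarith)
  have hlk_le : Real.log k ≤ k := (Real.log_le_sub_one_of_pos (by positivity)).trans (by linarith)
  have hℓR : (0 : ℝ) < ℓ := by exact_mod_cast hℓ1
  refine exp_one_mul_pow_mul_pow_le hk (by positivity) ?_ hℓ hℓ1 (le_trans ?_ hw)
  · rw [div_le_div_iff₀ (by positivity) (by positivity)]
    nlinarith
  · have he : Real.exp 8 = Real.exp 1 * Real.exp 7 := by rw [← Real.exp_add]; norm_num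
    rw [he, div_mul_div_comm, div_le_iff₀ (by positivity)]
    field_simp
    nlinarith [Real.exp_pos 1, Real.exp_pos 7]

theorem statement15 :
    ∃ k₀ : ℕ, ∀ k : ℕ, k₀ ≤ k → ∀ d : ℝ,
      2 * k * Real.log k - Real.log k - 4 ≤ d → d ≤ 2 * k * Real.log k →
      Tendsto (fun n : ℕ =>
          prob (fun e : MultiSpace n ⌈d * n / 2⌉₊ =>
            ∀ Y : Finset (Fin n), Y.Nonempty →
              Y.card ≤ ⌈2 * n * Real.log (Real.log k) / (k * Real.log k)⌉₊ →
              (eIn e Y : ℝ) < (Real.exp (-7) * Real.log k / 2) * Y.card))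
        atTop (nhds 1) := by
  obtain ⟨k₀, hk₀⟩ := eventually_atTop.1 eventually_log_conditions
  refine ⟨k₀, fun k hk d _ hd => ?_⟩
  obtain ⟨hk4, hlk, hllk, hw⟩ := hk₀ k hk
  have hkR : (4 : ℝ) ≤ k := by exact_mod_cast hk4
  have hklk : 1 ≤ k * Real.log k := by nlinarith [Real.exp_pos 7, Real.add_one_le_exp 7]
  have hℓ : 2 ≤ ⌊Real.exp (-7) * Real.log k / 2⌋₊ :=
    Nat.le_floor (by exact_mod_cast two_le_exp_neg_seven_mul_div_two hlk)
  refine tendsto_prob_forall_eIn_lt (a := 2 * Real.exp 1 * (k * Real.log k) / _) hℓ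
    (Nat.floor_le (by positivity)) (by positivity) (by positivity) ?_
    (eventually_ceil_two_mul_le (by positivity) (by positivity))
    (exp_one_mul_pow_mul_pow_le_of_log hk4 hllk hw (le_mul_natFloor_of_le hlk) (by omega))
  rw [div_mul_cancel₀ _ (by positivity)]
  exact eventually_exp_one_mul_ceil_le hklk (by linarith)
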